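/- arXiv:2304.04872 — 2 statements merged into one kernel-verified Lean document; each statement's English description precedes it below -/
import Mathlib

section
/- Let R be a commutative ring. Let Spec_k(fgId(R)) denote the set of prime subtractive ideals of the semiring fgId(R), and for X ⊆ fgId(R) let V_k(X) = {p ∈ Spec_k(fgId(R)) : X ⊆ p}. Then the family {V_k(X) : X ⊆ fgId(R)} is the family of closed sets of a topology on Spec_k(fgId(R)) (it contains the empty set and the whole space and is closed under finite unions and arbitrary intersections), and the map Spec(R) → Spec_k(fgId(R)), p ↦ ⟨u_R(p)⟩_k, is a homeomorphism, where Spec(R) carries the Zariski topology. -/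
/-- The type of finitely generated ideals of a commutative ring `R`. -/
def FGIdeal (R : Type*) [CommRing R] : Type _ := {I : Ideal R // I.FG}

namespace FGIdeal

variable {R : Type*} [CommRing R]

instance : Zero (FGIdeal R) := ⟨⟨⊥, Submodule.fg_bot⟩⟩

instance : One (FGIdeal R) := ⟨⟨1, ⟨{1}, by simp [Ideal.one_eq_top]⟩⟩⟩

instance : Add (FGIdeal R) :=
  ⟨fun I J => ⟨I.1 + J.1, by rw [Submodule.add_eq_sup]; exact Submodule.FG.sup I.2 J.2⟩⟩

instance : Mul (FGIdeal R) := ⟨fun I J => ⟨I.1 * J.1, Submodule.FG.mul I.2 J.2⟩⟩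

instance : SMul ℕ (FGIdeal R) :=
  ⟨fun n I => ⟨n • I.1, by
    induction n with
    | zero => show Submodule.FG _; simpa using Submodule.fg_bot
    | succ n ih => rw [succ_nsmul, Submodule.add_eq_sup]; exact Submodule.FG.sup ih I.2⟩⟩

instance : Pow (FGIdeal R) ℕ := ⟨fun I n => ⟨I.1 ^ n, Submodule.FG.pow I.2 n⟩⟩

instance : NatCast (FGIdeal R) :=
  ⟨fun n => ⟨(n : Ideal R), by
    induction n with
    | zero => show Submodule.FG _; simpa using Submodule.fg_bot
    | succ n ih =>
        rw [Nat.cast_succ, Submodule.add_eq_sup]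
        exact Submodule.FG.sup ih ⟨{1}, by simp [Ideal.one_eq_top]⟩⟩⟩

instance : CommSemiring (FGIdeal R) :=
  Subtype.val_injective.commSemiring (fun I : FGIdeal R => I.1) rfl rfl
    (fun _ _ => rfl) (fun _ _ => rfl) (fun _ _ => rfl) (fun _ _ => rfl) (fun _ => rfl)

end FGIdeal

variable {R : Type*} [CommRing R]

/-- The universal integral seminorm `u_R : R → fgId(R)`, `a ↦ R·a`. -/
def uRfg (a : R) : FGIdeal R := ⟨Ideal.span {a}, Submodule.fg_span_singleton a⟩
section SemiringIdeals

variable {S : Type*} [CommSemiring S]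

/-- A subset of a commutative semiring which is an ideal: it contains `0` and is closed
under addition and under multiplication by arbitrary elements. -/
def IsIdealSet (I : Set S) : Prop :=
  (0 : S) ∈ I ∧ (∀ a ∈ I, ∀ b ∈ I, a + b ∈ I) ∧ ∀ (c : S), ∀ a ∈ I, c * a ∈ I

/-- A subset `I` is subtractive if `a + b ∈ I` and `a ∈ I` imply `b ∈ I`. -/
def IsSubtractiveSet (I : Set S) : Prop :=
  ∀ a b : S, a + b ∈ I → a ∈ I → b ∈ I

/-- A `k`-ideal (subtractive ideal) of a commutative semiring. -/
def IsKIdeal (I : Set S) : Prop := IsIdealSet I ∧ IsSubtractiveSet I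

/-- The smallest subtractive ideal containing a subset `X`. -/
def kClosure (X : Set S) : Set S := ⋂₀ {J : Set S | IsKIdeal J ∧ X ⊆ J}

/-- The smallest ideal containing a subset `X`. -/
def idealGen (X : Set S) : Set S := ⋂₀ {J : Set S | IsIdealSet J ∧ X ⊆ J}

/-- An ideal of a commutative semiring is prime when its complement is multiplicatively
closed: `1 ∉ I` and `a * b ∈ I` implies `a ∈ I` or `b ∈ I`. -/
def IsPrimeSet (I : Set S) : Prop :=
  (1 : S) ∉ I ∧ ∀ a b : S, a * b ∈ I → a ∈ I ∨ b ∈ I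

end SemiringIdeals

/-- The map `Id(R) → Id_k(fgId(R))`, `I ↦ ⟨u_R(I)⟩_k`. -/
def uRtilde {R : Type*} [CommRing R] (I : Ideal R) : Set (FGIdeal R) :=
  kClosure (uRfg '' (I : Set R))

/-- `Spec_k(fgId(R))`: the set of prime subtractive ideals of the semiring `fgId(R)`. -/
def SpecK (R : Type*) [CommRing R] : Type _ :=
  {p : Set (FGIdeal R) // IsKIdeal p ∧ IsPrimeSet p}

/-- The Zariski closed sets `V_k(X) = {p ∈ Spec_k(fgId(R)) : X ⊆ p}`. -/
def Vk {R : Type*} [CommRing R] (X : Set (FGIdeal R)) : Set (SpecK R) :=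
  {p : SpecK R | X ⊆ p.1}

/-- The Zariski topology on `Spec_k(fgId(R))`, generated by the complements of the sets
`V_k(X)`. -/
instance SpecK.instTopologicalSpace (R : Type*) [CommRing R] : TopologicalSpace (SpecK R) :=
  TopologicalSpace.generateFrom {U : Set (SpecK R) | ∃ X : Set (FGIdeal R), U = (Vk X)ᶜ}

/-! A subtractive ideal `P` of `fgId(R)` is downward closed, since `J ≤ I` means `I + J = I`.
Hence `P` is the set of finitely generated ideals contained in `u_R⁻¹(P)`, an ideal of `R`;
conversely the finitely generated ideals below an ideal `I` form the smallest subtractive ideal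
containing `u_R(I)`. Primes correspond to primes, and the closed sets match because
`V_k(X)` pulls back to the zero locus of `⋃ X` while `V(S)` pulls back to `V_k(u_R(S))`. -/

namespace FGIdeal

lemma ext {I J : FGIdeal R} (h : I.1 = J.1) : I = J := Subtype.ext h

lemma val_add (I J : FGIdeal R) : (I + J).1 = I.1 ⊔ J.1 :=
  Submodule.add_eq_sup I.1 J.1

lemma val_one : (1 : FGIdeal R).1 = ⊤ := Ideal.one_eq_top

lemma add_eq_left {I J : FGIdeal R} (h : J.1 ≤ I.1) : I + J = I :=
  ext <| (val_add I J).trans (sup_eq_left.2 h)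

def below (I : Ideal R) : Set (FGIdeal R) := {J | J.1 ≤ I}

lemma isKIdeal_below (I : Ideal R) : IsKIdeal (below I) := by
  refine ⟨⟨(bot_le : (0 : FGIdeal R).1 ≤ I), fun a ha b hb => ?_, fun c a ha => ?_⟩,
    fun a b hab _ => ?_⟩
  · exact (val_add a b).trans_le (sup_le ha hb)
  · exact (Ideal.mul_le_right : c.1 * a.1 ≤ a.1).trans ha
  · exact le_sup_right.trans ((val_add a b).symm.trans_le hab)

lemma isPrimeSet_below (p : Ideal R) [hp : p.IsPrime] : IsPrimeSet (below p) :=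
  ⟨fun h => hp.ne_top (top_le_iff.1 (val_one.symm.trans_le h)), fun _ _ hab => hp.mul_le.1 hab⟩

end FGIdeal

open FGIdeal

lemma uRfg_zero : uRfg (0 : R) = 0 := FGIdeal.ext Ideal.span_singleton_zero

lemma uRfg_one : uRfg (1 : R) = 1 := FGIdeal.ext (Ideal.span_singleton_one.trans val_one.symm)

lemma uRfg_mul (a b : R) : uRfg (a * b) = uRfg a * uRfg b :=
  FGIdeal.ext (Ideal.span_singleton_mul_span_singleton a b).symm

lemma uRfg_le_iff {a : R} {I : Ideal R} : (uRfg a).1 ≤ I ↔ a ∈ I :=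
  Ideal.span_singleton_le_iff_mem I

lemma IsSubtractiveSet.mem_of_le {P : Set (FGIdeal R)} (hP : IsSubtractiveSet P)
    {I J : FGIdeal R} (hI : I ∈ P) (hJI : J.1 ≤ I.1) : J ∈ P :=
  hP I J ((add_eq_left hJI).symm ▸ hI) hI

lemma IsIdealSet.mem_of_le {K : Set (FGIdeal R)} (hK : IsIdealSet K) {I : Ideal R}
    (hI : uRfg '' (I : Set R) ⊆ K) (J : FGIdeal R) (hJ : J.1 ≤ I) : J ∈ K := by
  obtain ⟨J, hJfg⟩ := J
  induction J, hJfg using Submodule.fg_induction with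
  | singleton a => exact hI ⟨a, uRfg_le_iff.1 hJ, rfl⟩
  | sup J₁ J₂ hJ₁ hJ₂ ih₁ ih₂ =>
    have hsum : (⟨J₁, hJ₁⟩ + ⟨J₂, hJ₂⟩ : FGIdeal R) = ⟨J₁ ⊔ J₂, hJ₁.sup hJ₂⟩ :=
      FGIdeal.ext (val_add _ _)
    exact hsum ▸ hK.2.1 _ (ih₁ (le_sup_left.trans hJ)) _ (ih₂ (le_sup_right.trans hJ))

lemma uRtilde_eq_below (I : Ideal R) : uRtilde I = below I := by
  refine subset_antisymm (Set.sInter_subset_of_mem ⟨isKIdeal_below I, ?_⟩)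
    fun J hJ K hK => hK.1.1.mem_of_le hK.2 J hJ
  rintro _ ⟨a, ha, rfl⟩
  exact uRfg_le_iff.2 ha

def IsKIdeal.comap {P : Set (FGIdeal R)} (hP : IsKIdeal P) : Ideal R where
  carrier := uRfg ⁻¹' P
  zero_mem' := by
    simpa only [Set.mem_preimage, uRfg_zero] using hP.1.1
  add_mem' {a b} ha hb := by
    refine hP.2.mem_of_le (hP.1.2.1 _ ha _ hb) ?_
    rw [val_add, uRfg_le_iff]
    exact Ideal.add_mem _ (Ideal.mem_sup_left (Ideal.mem_span_singleton_self a))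
      (Ideal.mem_sup_right (Ideal.mem_span_singleton_self b))
  smul_mem' c a ha := by
    simpa only [Set.mem_preimage, smul_eq_mul, uRfg_mul] using hP.1.2.2 _ _ ha

lemma IsKIdeal.below_comap {P : Set (FGIdeal R)} (hP : IsKIdeal P) : below hP.comap = P :=
  subset_antisymm (hP.1.mem_of_le fun _ ⟨_, ha, h⟩ => h ▸ ha)
    fun _ hJ _ ha => hP.2.mem_of_le hJ (uRfg_le_iff.2 ha)

lemma IsKIdeal.comap_isPrime {P : Set (FGIdeal R)} (hP : IsKIdeal P) (hP' : IsPrimeSet P) :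
    hP.comap.IsPrime := by
  refine ⟨fun h => hP'.1 ?_, fun {a b} hab => hP'.2 _ _ ?_⟩
  · exact uRfg_one (R := R) ▸ hP.comap.eq_top_iff_one.1 h
  · exact uRfg_mul a b ▸ hab

def specKEquiv (R : Type*) [CommRing R] : PrimeSpectrum R ≃ SpecK R where
  toFun p := ⟨below p.asIdeal, isKIdeal_below _, isPrimeSet_below _⟩
  invFun P := ⟨P.2.1.comap, P.2.1.comap_isPrime P.2.2⟩
  left_inv _ := PrimeSpectrum.ext <| Ideal.ext fun _ => uRfg_le_iff
  right_inv P := Subtype.ext P.2.1.below_comap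

lemma specKEquiv_apply (p : PrimeSpectrum R) : (specKEquiv R p).1 = uRtilde p.asIdeal :=
  (uRtilde_eq_below _).symm

lemma Vk_empty : Vk (∅ : Set (FGIdeal R)) = Set.univ :=
  Set.eq_univ_of_forall fun p => Set.empty_subset p.1

lemma Vk_univ : Vk (Set.univ : Set (FGIdeal R)) = ∅ :=
  Set.eq_empty_of_forall_notMem fun p hp => p.2.2.1 (hp (Set.mem_univ 1))

lemma Vk_union (X Y : Set (FGIdeal R)) : Vk X ∪ Vk Y = Vk (Set.image2 (· * ·) X Y) := by
  ext p
  obtain ⟨⟨⟨-, -, hmul⟩, -⟩, -, hprime⟩ := p.2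
  refine ⟨?_, fun h => or_iff_not_imp_left.2 fun hX y hy => ?_⟩
  · rintro (hX | hY) _ ⟨x, hx, y, hy, rfl⟩
    · exact (mul_comm y x ▸ hmul y x (hX hx) : x * y ∈ p.1)
    · exact hmul x y (hY hy)
  · obtain ⟨x, hx, hxp⟩ := Set.not_subset.1 hX
    exact (hprime x y (h (Set.mem_image2_of_mem hx hy))).resolve_left hxp

lemma sInter_eq_Vk {F : Set (Set (SpecK R))} (hF : ∀ A ∈ F, ∃ X : Set (FGIdeal R), A = Vk X) :
    ⋂₀ F = Vk (⋃₀ {X | Vk X ∈ F}) := by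
  ext p
  simp only [Set.mem_sInter, Vk, Set.mem_ofPred_eq, Set.sUnion_subset_iff]
  refine ⟨fun h X hX => h _ hX, fun h A hA => ?_⟩
  obtain ⟨X, rfl⟩ := hF A hA
  exact h X hA

lemma SpecK.isOpen_iff {U : Set (SpecK R)} : IsOpen U ↔ ∃ X : Set (FGIdeal R), U = (Vk X)ᶜ := by
  refine ⟨fun h => ?_, fun h => TopologicalSpace.GenerateOpen.basic _ h⟩
  induction h with
  | basic U hU => exact hU
  | univ => exact ⟨Set.univ, by rw [Vk_univ, Set.compl_empty]⟩
  | inter U V _ _ ihU ihV =>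
    obtain ⟨X, rfl⟩ := ihU
    obtain ⟨Y, rfl⟩ := ihV
    exact ⟨_, by rw [← Set.compl_union, Vk_union]⟩
  | sUnion S _ ih =>
    have hS : ∀ A ∈ compl '' S, ∃ X : Set (FGIdeal R), A = Vk X := by
      rintro _ ⟨U, hU, rfl⟩
      obtain ⟨X, rfl⟩ := ih U hU
      exact ⟨X, compl_compl _⟩
    exact ⟨_, by rw [← sInter_eq_Vk hS, ← Set.compl_sUnion, compl_compl]⟩

lemma SpecK.isClosed_iff {A : Set (SpecK R)} : IsClosed A ↔ ∃ X : Set (FGIdeal R), A = Vk X := by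
  simp only [← isOpen_compl_iff, SpecK.isOpen_iff, compl_inj_iff]

lemma specKEquiv_preimage_Vk (X : Set (FGIdeal R)) :
    specKEquiv R ⁻¹' Vk X = PrimeSpectrum.zeroLocus (⋃ J ∈ X, (J.1 : Set R)) := by
  ext p
  simp only [Set.mem_preimage, PrimeSpectrum.mem_zeroLocus, Set.iUnion_subset_iff]
  rfl

lemma specKEquiv_symm_preimage_zeroLocus (S : Set R) :
    (specKEquiv R).symm ⁻¹' PrimeSpectrum.zeroLocus S = Vk (uRfg '' S) := by
  ext P
  simp only [Set.mem_preimage, PrimeSpectrum.mem_zeroLocus, Vk, Set.mem_ofPred_eq,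
    Set.image_subset_iff]
  rfl

def specKHomeomorph (R : Type*) [CommRing R] : PrimeSpectrum R ≃ₜ SpecK R where
  toEquiv := specKEquiv R
  continuous_toFun := continuous_iff_isClosed.2 fun _ hA => by
    obtain ⟨X, rfl⟩ := SpecK.isClosed_iff.1 hA
    exact specKEquiv_preimage_Vk X ▸ PrimeSpectrum.isClosed_zeroLocus _
  continuous_invFun := continuous_iff_isClosed.2 fun _ hA => by
    obtain ⟨S, rfl⟩ := (PrimeSpectrum.isClosed_iff_zeroLocus _).1 hA
    exact SpecK.isClosed_iff.2 ⟨_, specKEquiv_symm_preimage_zeroLocus S⟩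

/-- The family `{V_k(X) : X ⊆ fgId(R)}` is the family of closed sets
of a topology on `Spec_k(fgId(R))`: it contains the empty set and the whole space, and
it is closed under finite unions and arbitrary intersections; moreover
`Spec(R) → Spec_k(fgId(R))`, `p ↦ ⟨u_R(p)⟩_k`, is a homeomorphism for the Zariski
topologies. -/
theorem speck_topology_and_homeomorph (R : Type*) [CommRing R] :
    (Set.univ ∈ {A : Set (SpecK R) | ∃ X : Set (FGIdeal R), A = Vk X}) ∧
    (∅ ∈ {A : Set (SpecK R) | ∃ X : Set (FGIdeal R), A = Vk X}) ∧
    (∀ A B : Set (SpecK R), (∃ X, A = Vk X) → (∃ Y, B = Vk Y) →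
      ∃ Z : Set (FGIdeal R), A ∪ B = Vk Z) ∧
    (∀ F : Set (Set (SpecK R)), (∀ A ∈ F, ∃ X : Set (FGIdeal R), A = Vk X) →
      ∃ Z : Set (FGIdeal R), ⋂₀ F = Vk Z) ∧
    (∀ A : Set (SpecK R), IsClosed A ↔ ∃ X : Set (FGIdeal R), A = Vk X) ∧
    ∃ h : PrimeSpectrum R ≃ₜ SpecK R,
      ∀ p : PrimeSpectrum R, (h p).1 = uRtilde p.asIdeal := by
  refine ⟨⟨∅, Vk_empty.symm⟩, ⟨Set.univ, Vk_univ.symm⟩, ?_, fun F hF => ⟨_, sInter_eq_Vk hF⟩,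
    fun _ => SpecK.isClosed_iff, specKHomeomorph R, specKEquiv_apply⟩
  rintro A B ⟨X, rfl⟩ ⟨Y, rfl⟩
  exact ⟨_, Vk_union X Y⟩
end

section
/- Let R be a commutative ring and let I be a subtractive ideal of the semiring fgId(R) with I ≠ fgId(R). Then the radical √I := {α ∈ fgId(R) : αⁿ ∈ I for some integer n ≥ 1} is a subtractive ideal of fgId(R) and equals the intersection of all prime subtractive ideals of fgId(R) containing I. Moreover, the bijection ũ : Id(R) → Id_k(fgId(R)), J ↦ ⟨u_R(J)⟩_k, preserves radicals: ũ(rad(J)) = √(ũ(J)) for every proper ideal J of R; in particular ũ maps radical ideals of R to radical subtractive ideals of fgId(R). -/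
variable {R : Type*} [CommRing R]

/-- The radical `√I = {a : aⁿ ∈ I for some n ≥ 1}` of an ideal of a commutative
semiring. -/
def sqrtK {S : Type*} [CommSemiring S] (I : Set S) : Set S :=
  {a : S | ∃ n : ℕ, 1 ≤ n ∧ a ^ n ∈ I}

/-!
A subtractive ideal `K` of `fgId(R)` is closed downwards under inclusion, because `α ⊆ β`
means `β + α = β`. Since every `α` is a finite sum of principal ideals `R·x`, `K` is therefore
the set of finitely generated ideals contained in the ideal `{x | R·x ∈ K}` of `R`. So
`J ↦ {α | α ⊆ J}` identifies ideals of `R` with subtractive ideals of `fgId(R)`; it is `ũ`,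
it matches prime ideals with prime subtractive ideals, and it carries `rad J` to `√(ũ J)`
because a finitely generated `α ⊆ rad J` has a power inside `J`. All claims then follow from
`rad J = ⋂ {P prime | J ⊆ P}` in `R`.
-/

namespace FGIdeal

lemma val_add_s13 (α β : FGIdeal R) : (α + β).1 = α.1 ⊔ β.1 :=
  Submodule.add_eq_sup _ _

lemma val_pow (α : FGIdeal R) (n : ℕ) : (α ^ n).1 = α.1 ^ n :=
  rfl

def ofIdeal (J : Ideal R) : Set (FGIdeal R) :=
  {α | α.1 ≤ J}

lemma isKIdeal_ofIdeal (J : Ideal R) : IsKIdeal (ofIdeal J) := by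
  refine ⟨⟨show (0 : FGIdeal R).1 ≤ J from bot_le, fun α hα β hβ => ?_,
    fun γ α hα => show (γ * α).1 ≤ J from Ideal.mul_le_right.trans hα⟩, fun α β hαβ _ => ?_⟩
  · exact (val_add_s13 α β).trans_le (sup_le hα hβ)
  · exact le_sup_right.trans ((val_add_s13 α β).symm.trans_le hαβ)

lemma ofIdeal_subset_ofIdeal_iff {J P : Ideal R} : ofIdeal J ⊆ ofIdeal P ↔ J ≤ P := by
  refine ⟨fun h x hx => ?_, fun h α hα => hα.trans h⟩
  exact h (show (uRfg x).1 ≤ J from (Ideal.span_singleton_le_iff_mem _).2 hx)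
    (Ideal.mem_span_singleton_self x)

lemma isPrimeSet_ofIdeal_iff {P : Ideal R} : IsPrimeSet (ofIdeal P) ↔ P.IsPrime := by
  constructor
  · rintro ⟨hone, hmul⟩
    refine ⟨fun hP => hone (show (1 : Ideal R) ≤ P by rw [hP]; exact le_top), fun {a b} hab => ?_⟩
    have hab' : uRfg a * uRfg b ∈ ofIdeal P := by
      show Ideal.span {a} * Ideal.span {b} ≤ P
      rw [Ideal.span_singleton_mul_span_singleton]
      exact (Ideal.span_singleton_le_iff_mem _).2 hab
    exact (hmul _ _ hab').imp (· (Ideal.mem_span_singleton_self a))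
      (· (Ideal.mem_span_singleton_self b))
  · intro hP
    refine ⟨fun h => hP.ne_top (top_le_iff.1 ?_), fun α β => hP.mul_le.1⟩
    rw [← Ideal.one_eq_top]
    exact h

lemma sqrtK_ofIdeal (J : Ideal R) : sqrtK (ofIdeal J) = ofIdeal J.radical := by
  ext α
  constructor
  · rintro ⟨n, -, hn⟩ x hx
    exact ⟨n, hn (show x ^ n ∈ α.1 ^ n from Ideal.pow_mem_pow hx n)⟩
  · intro h
    obtain ⟨n, hn⟩ := Ideal.exists_pow_le_of_le_radical_of_fg h α.2
    refine ⟨n + 1, Nat.le_add_left 1 n, ?_⟩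
    show (α ^ (n + 1)).1 ≤ J
    rw [val_pow, pow_succ]
    exact Ideal.mul_le_left.trans hn

end FGIdeal

open FGIdeal

lemma IsSubtractiveSet.mem_of_val_le {K : Set (FGIdeal R)} (hK : IsSubtractiveSet K)
    {α β : FGIdeal R} (hβ : β ∈ K) (h : α.1 ≤ β.1) : α ∈ K := by
  have hβα : β + α = β := Subtype.ext ((val_add_s13 β α).trans (sup_eq_left.2 h))
  exact hK β α (by rwa [hβα]) hβ

lemma IsSubtractiveSet.uRfg_mem {K : Set (FGIdeal R)} (hK : IsSubtractiveSet K)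
    {β : FGIdeal R} (hβ : β ∈ K) {x : R} (hx : x ∈ β.1) : uRfg x ∈ K :=
  hK.mem_of_val_le hβ ((Ideal.span_singleton_le_iff_mem _).2 hx)

lemma IsIdealSet.exists_mem_span_le {K : Set (FGIdeal R)} (hK : IsIdealSet K) (s : Finset R)
    (hs : ∀ x ∈ s, uRfg x ∈ K) : ∃ β ∈ K, Ideal.span (s : Set R) ≤ β.1 := by
  classical
  induction s using Finset.induction with
  | empty => exact ⟨0, hK.1, by simp⟩
  | insert x s _ ih =>
    obtain ⟨β, hβ, hle⟩ := ih fun y hy => hs y (Finset.mem_insert_of_mem hy)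
    refine ⟨uRfg x + β, hK.2.1 _ (hs x (Finset.mem_insert_self x s)) _ hβ, ?_⟩
    rw [Finset.coe_insert, Ideal.span_insert, val_add_s13]
    exact sup_le_sup_left hle _

lemma IsKIdeal.mem_of_forall_uRfg_mem {K : Set (FGIdeal R)} (hK : IsKIdeal K)
    {α : FGIdeal R} (h : ∀ x ∈ α.1, uRfg x ∈ K) : α ∈ K := by
  obtain ⟨s, hs⟩ := α.2
  obtain ⟨β, hβ, hle⟩ := hK.1.exists_mem_span_le s fun x hx => h x (hs ▸ Ideal.subset_span hx)
  exact hK.2.mem_of_val_le hβ (hs ▸ hle)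

def IsKIdeal.toIdeal {K : Set (FGIdeal R)} (hK : IsKIdeal K) : Ideal R where
  carrier := {x | uRfg x ∈ K}
  zero_mem' := hK.2.uRfg_mem hK.1.1 (zero_mem _)
  add_mem' {x y} hx hy := hK.2.uRfg_mem (hK.1.2.1 _ hx _ hy) <| by
    rw [val_add_s13]
    exact Submodule.add_mem_sup (Ideal.mem_span_singleton_self x) (Ideal.mem_span_singleton_self y)
  smul_mem' c x hx := hK.2.uRfg_mem hx (Ideal.mul_mem_left _ c (Ideal.mem_span_singleton_self x))

lemma IsKIdeal.exists_eq_ofIdeal {K : Set (FGIdeal R)} (hK : IsKIdeal K) :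
    ∃ J : Ideal R, K = ofIdeal J := by
  refine ⟨hK.toIdeal, Set.ext fun α => ⟨fun hα x hx => hK.2.uRfg_mem hα hx, fun h => ?_⟩⟩
  exact hK.mem_of_forall_uRfg_mem fun x hx => h hx

lemma uRtilde_eq_ofIdeal (J : Ideal R) : uRtilde J = ofIdeal J := by
  refine subset_antisymm (Set.sInter_subset_of_mem ⟨isKIdeal_ofIdeal J, ?_⟩) ?_
  · rintro _ ⟨x, hx, rfl⟩
    exact (Ideal.span_singleton_le_iff_mem _).2 hx
  · rintro α hα K ⟨hK, hJK⟩
    exact hK.mem_of_forall_uRfg_mem fun x hx => hJK ⟨x, hα hx, rfl⟩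

lemma sInter_prime_kIdeals_supset_ofIdeal (J : Ideal R) :
    ⋂₀ {p : Set (FGIdeal R) | (IsKIdeal p ∧ IsPrimeSet p) ∧ ofIdeal J ⊆ p} =
      ofIdeal J.radical := by
  ext α
  constructor
  · intro hα
    show α.1 ≤ J.radical
    rw [Ideal.radical_eq_sInf]
    refine le_sInf fun P ⟨hJP, hP⟩ => hα (ofIdeal P) ?_
    exact ⟨⟨isKIdeal_ofIdeal P, isPrimeSet_ofIdeal_iff.2 hP⟩, ofIdeal_subset_ofIdeal_iff.2 hJP⟩
  · rintro hα p ⟨⟨hpk, hpp⟩, hJp⟩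
    obtain ⟨P, rfl⟩ := hpk.exists_eq_ofIdeal
    have hJP := (isPrimeSet_ofIdeal_iff.1 hpp).radical_le_iff.2 (ofIdeal_subset_ofIdeal_iff.1 hJp)
    exact ofIdeal_subset_ofIdeal_iff.2 hJP hα

/-- For a proper subtractive ideal `I` of `fgId(R)`, the radical `√I`
is a subtractive ideal equal to the intersection of the prime subtractive ideals
containing `I`; moreover the bijection `ũ : Id(R) → Id_k(fgId(R))` preserves radicals:
`ũ(rad J) = √(ũ J)` for every proper ideal `J` of `R`, and in particular `ũ` maps
radical ideals to radical subtractive ideals. -/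
theorem radical_of_kIdeal_and_uRtilde_preserves_radicals (R : Type*) [CommRing R] :
    (∀ I : Set (FGIdeal R), IsKIdeal I → I ≠ Set.univ →
      IsKIdeal (sqrtK I) ∧
        sqrtK I = ⋂₀ {p : Set (FGIdeal R) | (IsKIdeal p ∧ IsPrimeSet p) ∧ I ⊆ p}) ∧
    (∀ J : Ideal R, J ≠ ⊤ → uRtilde J.radical = sqrtK (uRtilde J)) ∧
    (∀ J : Ideal R, J ≠ ⊤ → J.radical = J → sqrtK (uRtilde J) = uRtilde J) := by
  refine ⟨fun I hI _ => ?_, fun J _ => ?_, fun J _ hJ => ?_⟩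
  · obtain ⟨J, rfl⟩ := hI.exists_eq_ofIdeal
    rw [sqrtK_ofIdeal, sInter_prime_kIdeals_supset_ofIdeal]
    exact ⟨isKIdeal_ofIdeal _, rfl⟩
  · rw [uRtilde_eq_ofIdeal, uRtilde_eq_ofIdeal, sqrtK_ofIdeal]
  · rw [uRtilde_eq_ofIdeal, sqrtK_ofIdeal, hJ]
end
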